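/- arXiv:1508.05688 — 4 statements merged into one kernel-verified Lean document; each statement's English description precedes it below -/
import Mathlib

section
/- Let m ≥ 1 and k ∈ ℕ. The real vector space of homogeneous polynomials of degree k in the variables x_1, …, x_{m+1} that are invariant under the special orthogonal group SO(m+1) (i.e. polynomials P with P(Ax) = P(x) for every A ∈ SO(m+1)) has dimension 1 when k is even and dimension 0 when k is odd. -/
/-!
Two vectors of the same length are related by a rotation (a product of two Householder
reflections, which needs at least two coordinates), so a rotation-invariant polynomial is
constant on spheres. If it is also homogeneous of degree `k`, then `P x = |x|ᵏ P e₀`. For odd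
`k` the rotation taking `x` to `-x` forces `P = 0`; for even `k = 2t` this says that `P` is a
multiple of `(x₁² + ⋯ + x_{m+1}²)ᵗ`, which is itself invariant and nonzero.
-/

open Matrix MvPolynomial

/-- The space of homogeneous polynomials of degree `k` in `m+1` variables that are invariant
under `SO(m+1)` (matrices `A` with `AᵀA = 1`, `det A = 1`, acting by substitution `x ↦ Ax`):
the space of symmetric isotropic tensors of order `k`. -/
noncomputable def isotropicSubmodule (m k : ℕ) : Submodule ℝ (MvPolynomial (Fin (m + 1)) ℝ) where
  carrier := {P | P.IsHomogeneous k ∧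
    ∀ A : Matrix (Fin (m + 1)) (Fin (m + 1)) ℝ, Aᵀ * A = 1 → A.det = 1 →
      aeval (fun i => ∑ j, A i j • (X j : MvPolynomial (Fin (m + 1)) ℝ)) P = P}
  add_mem' := by
    rintro P Q ⟨hP1, hP2⟩ ⟨hQ1, hQ2⟩
    exact ⟨hP1.add hQ1, fun A h1 h2 => by rw [map_add, hP2 A h1 h2, hQ2 A h1 h2]⟩
  zero_mem' := ⟨isHomogeneous_zero _ _ _, fun A h1 h2 => map_zero _⟩
  smul_mem' := by
    rintro c P ⟨hP1, hP2⟩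
    refine ⟨fun d hd => hP1 ?_, fun A h1 h2 => by rw [_root_.map_smul, hP2 A h1 h2]⟩
    intro h
    apply hd
    rw [coeff_smul, h, smul_zero]

namespace Matrix

variable {l n K : Type*} [Fintype n] [Field K]

lemma exists_ne_zero_dotProduct_eq_zero (hn : 1 < Fintype.card n) (y : n → K) :
    ∃ w : n → K, w ≠ 0 ∧ w ⬝ᵥ y = 0 := by
  have hker : LinearMap.ker (dotProductBilin K K y) ≠ ⊥ :=
    LinearMap.ker_ne_bot_of_finrank_lt (by simpa using hn)
  obtain ⟨w, hw, hw0⟩ := Submodule.exists_mem_ne_zero_of_ne_bot hker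
  exact ⟨w, hw0, by rw [dotProduct_comm]; simpa using hw⟩

variable [DecidableEq n]

lemma mulVec_dotProduct_mulVec_of_transpose_mul_self [Fintype l] {R : Type*} [CommSemiring R]
    {A : Matrix l n R} (hA : Aᵀ * A = 1) (x y : n → R) : (A *ᵥ x) ⬝ᵥ (A *ᵥ y) = x ⬝ᵥ y := by
  rw [dotProduct_mulVec, ← mulVec_transpose, mulVec_mulVec, hA, one_mulVec]

/-- When `v ⬝ᵥ v = 0` the coefficient is `2 / 0 = 0`, so this is `1`. -/
noncomputable def householder (v : n → K) : Matrix n n K :=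
  1 - (2 / (v ⬝ᵥ v)) • vecMulVec v v

lemma householder_transpose (v : n → K) : (householder v)ᵀ = householder v := by
  simp [householder, transpose_vecMulVec]

lemma householder_mul_self (v : n → K) : householder v * householder v = 1 := by
  by_cases hv : v ⬝ᵥ v = 0
  · simp [householder, hv]
  · simp only [householder, sub_mul, mul_sub, one_mul, mul_one, smul_mul_smul,
      vecMulVec_mul_vecMulVec, vecMulVec_smul, smul_smul]
    field_simp
    module

lemma householder_mulVec (v x : n → K) :
    householder v *ᵥ x = x - (2 * (v ⬝ᵥ x) / (v ⬝ᵥ v)) • v := by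
  rw [householder, sub_mulVec, one_mulVec, smul_mulVec, vecMulVec_mulVec]
  simp only [op_smul_eq_smul, smul_smul]
  ring_nf

lemma householder_mulVec_of_dotProduct_eq_zero {v x : n → K} (h : v ⬝ᵥ x = 0) :
    householder v *ᵥ x = x := by
  simp [householder_mulVec, h]

lemma householder_sub_mulVec {x y : n → K} (h : x ⬝ᵥ x = y ⬝ᵥ y)
    (hxy : (x - y) ⬝ᵥ (x - y) ≠ 0) : householder (x - y) *ᵥ x = y := by
  have key : (x - y) ⬝ᵥ (x - y) = 2 * ((x - y) ⬝ᵥ x) := by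
    simp only [sub_dotProduct, dotProduct_sub, h, dotProduct_comm y x]
    ring
  rw [householder_mulVec, key, div_self (key ▸ hxy), one_smul, sub_sub_cancel]

lemma det_householder {v : n → K} (hv : v ⬝ᵥ v ≠ 0) : (householder v).det = -1 := by
  rw [householder, sub_eq_add_neg, ← neg_smul, ← smul_vecMulVec, vecMulVec_eq Unit,
    det_one_add_replicateCol_mul_replicateRow, dotProduct_smul, smul_eq_mul]
  field_simp
  ring

theorem exists_specialOrthogonal_mulVec_eq [LinearOrder K] [IsStrictOrderedRing K]
    (hn : 1 < Fintype.card n) {x y : n → K} (h : x ⬝ᵥ x = y ⬝ᵥ y) :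
    ∃ A : Matrix n n K, Aᵀ * A = 1 ∧ A.det = 1 ∧ A *ᵥ x = y := by
  rcases eq_or_ne x y with rfl | hxy
  · exact ⟨1, by simp, det_one, one_mulVec x⟩
  obtain ⟨w, hw, hwy⟩ := exists_ne_zero_dotProduct_eq_zero hn y
  have hww : w ⬝ᵥ w ≠ 0 := mt dotProduct_self_eq_zero.mp hw
  have hxyxy : (x - y) ⬝ᵥ (x - y) ≠ 0 := mt dotProduct_self_eq_zero.mp (sub_ne_zero.mpr hxy)
  refine ⟨householder w * householder (x - y), ?_, ?_, ?_⟩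
  · rw [transpose_mul, householder_transpose, householder_transpose, Matrix.mul_assoc,
      ← Matrix.mul_assoc (householder w), householder_mul_self, Matrix.one_mul,
      householder_mul_self]
  · rw [det_mul, det_householder hww, det_householder hxyxy]
    norm_num
  · rw [← mulVec_mulVec, householder_sub_mulVec h hxyxy,
      householder_mulVec_of_dotProduct_eq_zero hwy]

end Matrix

namespace MvPolynomial

variable {σ R : Type*} [CommRing R]

lemma IsHomogeneous.eval_smul {P : MvPolynomial σ R} {k : ℕ} (hP : P.IsHomogeneous k)
    (r : R) (x : σ → R) : eval (r • x) P = r ^ k * eval x P := by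
  rw [eval_eq, eval_eq, Finset.mul_sum]
  refine Finset.sum_congr rfl fun d hd => ?_
  simp only [Pi.smul_apply, smul_eq_mul, mul_pow, Finset.prod_mul_distrib,
    Finset.prod_pow_eq_pow_sum, ← hP.degree_eq_sum_deg_support hd]
  ring

variable [Fintype σ]

lemma eval_aeval_sum_smul_X (A : Matrix σ σ R) (P : MvPolynomial σ R) (z : σ → R) :
    eval z (aeval (fun i => ∑ j, A i j • (X j : MvPolynomial σ R)) P) = eval (A *ᵥ z) P := by
  rw [aeval_eq_bind₁, eval, eval₂Hom_bind₁, ← eval]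
  congr 2
  funext i
  simp [mulVec, dotProduct]

variable (σ R) in
noncomputable def sumSq : MvPolynomial σ R := ∑ i, X i ^ 2

lemma eval_sumSq (x : σ → R) : eval x (sumSq σ R) = x ⬝ᵥ x := by
  simp [sumSq, dotProduct, sq]

lemma isHomogeneous_sumSq : (sumSq σ R).IsHomogeneous 2 :=
  IsHomogeneous.sum _ _ _ fun i _ => isHomogeneous_X_pow i 2

end MvPolynomial

section isotropicSubmodule

variable {m : ℕ}

lemma eval_eq_of_mem_isotropicSubmodule (hm : 1 ≤ m) {k : ℕ} {P : MvPolynomial (Fin (m + 1)) ℝ}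
    (hP : P ∈ isotropicSubmodule m k) {x y : Fin (m + 1) → ℝ} (h : x ⬝ᵥ x = y ⬝ᵥ y) :
    eval x P = eval y P := by
  obtain ⟨A, hA, hdet, rfl⟩ := exists_specialOrthogonal_mulVec_eq (by rw [Fintype.card_fin]; omega) h
  rw [← eval_aeval_sum_smul_X, hP.2 A hA hdet]

lemma isotropicSubmodule_eq_bot_of_odd (hm : 1 ≤ m) {k : ℕ} (hk : Odd k) :
    isotropicSubmodule m k = ⊥ := by
  refine (Submodule.eq_bot_iff _).mpr fun P hP => MvPolynomial.funext fun z => ?_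
  have h_inv : eval (-z) P = eval z P := eval_eq_of_mem_isotropicSubmodule hm hP (by simp)
  have h_odd : eval (-z) P = -eval z P := by
    rw [← neg_one_smul ℝ z, hP.1.eval_smul, hk.neg_one_pow, neg_one_mul]
  rw [map_zero]
  linarith

lemma sumSq_pow_mem_isotropicSubmodule (t : ℕ) :
    sumSq (Fin (m + 1)) ℝ ^ t ∈ isotropicSubmodule m (2 * t) :=
  ⟨isHomogeneous_sumSq.pow t, fun A hA _ => MvPolynomial.funext fun z => by
    rw [eval_aeval_sum_smul_X, map_pow, map_pow, eval_sumSq, eval_sumSq,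
      mulVec_dotProduct_mulVec_of_transpose_mul_self hA]⟩

lemma sumSq_pow_ne_zero (t : ℕ) : sumSq (Fin (m + 1)) ℝ ^ t ≠ 0 := by
  intro h
  simpa [eval_sumSq] using congrArg (eval (Pi.single 0 1)) h

lemma isotropicSubmodule_le_span_sumSq_pow (hm : 1 ≤ m) (t : ℕ) :
    isotropicSubmodule m (2 * t) ≤ ℝ ∙ sumSq (Fin (m + 1)) ℝ ^ t := by
  intro P hP
  refine Submodule.mem_span_singleton.mpr ⟨eval (Pi.single 0 1) P, MvPolynomial.funext fun z => ?_⟩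
  set r := √(z ⬝ᵥ z)
  have hr : r ^ 2 = z ⬝ᵥ z := Real.sq_sqrt (by simpa using dotProduct_self_star_nonneg z)
  have h_sphere : eval z P = eval (r • Pi.single 0 1) P :=
    eval_eq_of_mem_isotropicSubmodule hm hP (by rw [← hr]; simp [sq])
  rw [smul_eval, map_pow, eval_sumSq, h_sphere, hP.1.eval_smul, pow_mul, hr, mul_comm]

end isotropicSubmodule

/-- The real vector space of `SO(m+1)`-invariant homogeneous polynomials of degree `k` in
`m+1` variables has dimension `1` when `k` is even and dimension `0` when `k` is odd. -/
theorem stmt_8 (m k : ℕ) (hm : 1 ≤ m) :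
    (Even k → Module.rank ℝ (isotropicSubmodule m k) = 1) ∧
    (Odd k → Module.rank ℝ (isotropicSubmodule m k) = 0) := by
  refine ⟨fun hk => ?_, fun hk => by rw [isotropicSubmodule_eq_bot_of_odd hm hk, rank_bot]⟩
  obtain ⟨t, rfl⟩ := even_iff_two_dvd.mp hk
  exact (rank_submodule_eq_one_iff _).mpr ⟨_, sumSq_pow_mem_isotropicSubmodule t,
    sumSq_pow_ne_zero t, isotropicSubmodule_le_span_sumSq_pow hm t⟩
end

section
/- Let m ≥ 1 and let P be a homogeneous polynomial of degree d in the variables x_1, …, x_{m+1} that is invariant under the special orthogonal group SO(m+1), i.e. P(Ax) = P(x) for every A ∈ SO(m+1). If d is odd then P = 0, and if d = 2k is even then P = c·(x_1² + ⋯ + x_{m+1}²)^k for some constant c ∈ ℝ. -/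
/-!
Since `SO(m+1)` acts transitively on the unit sphere when `m ≥ 1`, an invariant `P` is constant,
say `c`, on the sphere, and homogeneity of degree `d` gives `P(x) = c ‖x‖^d` for every `x`.
Then `P(-x) = P(x)`, which against `P(-x) = (-1)^d P(x)` kills `P` for odd `d`, while for
`d = 2k` the formula reads `P = c (x_1² + ⋯ + x_{m+1}²)^k`.
-/

open Matrix MvPolynomial

theorem MvPolynomial.IsHomogeneous.eval_smul_s9 {R σ : Type*} [CommSemiring R] {φ : MvPolynomial σ R}
    {n : ℕ} (hφ : φ.IsHomogeneous n) (r : R) (x : σ → R) :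
    eval (r • x) φ = r ^ n * eval x φ := by
  rw [eval_eq, eval_eq, Finset.mul_sum]
  refine Finset.sum_congr rfl fun d hd => ?_
  have hdeg := hφ (mem_support_iff.mp hd)
  simp only [Pi.smul_apply, smul_eq_mul, mul_pow, Finset.prod_mul_distrib,
    Finset.prod_pow_eq_pow_sum]
  rw [← hdeg, Finsupp.weight_apply, Finsupp.sum]
  simp only [Pi.one_apply, smul_eq_mul, mul_one]
  ring

theorem exists_sum_sq_eq_one_and_eq_sqrt_smul {n : Type*} [Fintype n] [Nonempty n] (x : n → ℝ) :
    ∃ u : n → ℝ, ∑ i, u i ^ 2 = 1 ∧ x = √(∑ i, x i ^ 2) • u := by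
  classical
  set r := √(∑ i, x i ^ 2) with hr
  by_cases hr0 : r = 0
  · have hx : x = 0 := by
      ext i
      rw [hr, Real.sqrt_eq_zero (Finset.sum_nonneg fun i _ => sq_nonneg _),
        Finset.sum_eq_zero_iff_of_nonneg fun i _ => sq_nonneg _] at hr0
      simpa using hr0 i (Finset.mem_univ i)
    obtain ⟨i₀⟩ := ‹Nonempty n›
    exact ⟨Pi.single i₀ 1, by simp [sq, Pi.single_apply], by simp [hr0, hx]⟩
  · refine ⟨r⁻¹ • x, ?_, by rw [smul_smul, mul_inv_cancel₀ hr0, one_smul]⟩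
    have hr2 : r ^ 2 = ∑ i, x i ^ 2 := Real.sq_sqrt (Finset.sum_nonneg fun i _ => sq_nonneg _)
    simp only [Pi.smul_apply, smul_eq_mul, mul_pow, ← Finset.mul_sum, ← hr2]
    field_simp

theorem MvPolynomial.eval_aeval_mulVec {R n : Type*} [CommSemiring R] [Fintype n]
    (A : Matrix n n R) (x : n → R) (φ : MvPolynomial n R) :
    eval x (aeval (fun i => ∑ j, A i j • X j) φ) = eval (A *ᵥ x) φ := by
  induction φ using MvPolynomial.induction_on with
  | C a => simp
  | add p q hp hq => simp only [map_add, hp, hq]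
  | mul_X p i hp =>
    simp only [map_mul, hp, aeval_X, eval_X, map_sum, smul_eval, mulVec, dotProduct]

namespace Matrix

variable {n : Type*} [Fintype n] [DecidableEq n]

theorem exists_mem_orthogonalGroup_mulVec_single_eq (i₀ : n) {u : n → ℝ}
    (hu : ∑ i, u i ^ 2 = 1) :
    ∃ A ∈ orthogonalGroup n ℝ, A *ᵥ Pi.single i₀ 1 = u := by
  have hv : Orthonormal ℝ (({i₀} : Set n).domRestrict fun _ => WithLp.toLp 2 u) := by
    rw [orthonormal_iff_ite]
    rintro ⟨i, rfl⟩ ⟨j, rfl⟩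
    simp [EuclideanSpace.norm_eq, hu]
  obtain ⟨b, hb⟩ := hv.exists_orthonormalBasis_extension_of_card_eq (by simp)
  refine ⟨(EuclideanSpace.basisFun n ℝ).toBasis.toMatrix b,
    (EuclideanSpace.basisFun n ℝ).toMatrix_orthonormalBasis_mem_unitary b, ?_⟩
  ext i
  simp [Module.Basis.toMatrix_apply, hb i₀ rfl]

theorem exists_mem_orthogonalGroup_det_eq_neg_one_mulVec_single {R : Type*} [CommRing R]
    [Nontrivial n] (i₀ : n) :
    ∃ D ∈ orthogonalGroup n R, D.det = -1 ∧ D *ᵥ Pi.single i₀ 1 = Pi.single i₀ 1 := by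
  obtain ⟨j₀, hj₀⟩ := exists_ne i₀
  refine ⟨diagonal (Function.update 1 j₀ (-1)), ?_, ?_, ?_⟩
  · rw [mem_orthogonalGroup_iff, diagonal_transpose, diagonal_mul_diagonal, ← diagonal_one]
    congr 1
    ext i
    by_cases h : i = j₀ <;> simp [h]
  · simp [det_diagonal, Function.update_apply, Finset.prod_ite_eq']
  · ext i
    by_cases h : i = j₀ <;> simp [mulVec_diagonal, h, hj₀.symm]

theorem exists_mem_specialOrthogonalGroup_mulVec_single_eq [Nontrivial n] (i₀ : n) {u : n → ℝ}
    (hu : ∑ i, u i ^ 2 = 1) :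
    ∃ A ∈ specialOrthogonalGroup n ℝ, A *ᵥ Pi.single i₀ 1 = u := by
  obtain ⟨A, hA, hAu⟩ := exists_mem_orthogonalGroup_mulVec_single_eq i₀ hu
  have hdet : A.det * A.det = 1 := by
    simpa [det_transpose] using congr_arg det ((mem_orthogonalGroup_iff' n ℝ).mp hA)
  rcases mul_self_eq_one_iff.mp hdet with hdet | hdet
  · exact ⟨A, mem_specialOrthogonalGroup_iff.mpr ⟨hA, hdet⟩, hAu⟩
  · obtain ⟨D, hD, hDdet, hDe⟩ :=
      exists_mem_orthogonalGroup_det_eq_neg_one_mulVec_single (R := ℝ) i₀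
    refine ⟨A * D, mem_specialOrthogonalGroup_iff.mpr ⟨mul_mem hA hD, ?_⟩, ?_⟩
    · rw [det_mul, hdet, hDdet]; norm_num
    · rw [← mulVec_mulVec, hDe, hAu]

end Matrix

namespace MvPolynomial

variable {n : Type*} [Fintype n] [DecidableEq n] [Nontrivial n] {P : MvPolynomial n ℝ} {d : ℕ}

def IsSOInvariant (P : MvPolynomial n ℝ) : Prop :=
  ∀ A ∈ specialOrthogonalGroup n ℝ, ∀ x, eval (A *ᵥ x) P = eval x P

theorem IsSOInvariant.eval_eq_of_sum_sq_eq_one (hinv : P.IsSOInvariant) (i₀ : n) {u : n → ℝ}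
    (hu : ∑ i, u i ^ 2 = 1) :
    eval u P = eval (Pi.single i₀ 1) P := by
  obtain ⟨A, hA, hAu⟩ := exists_mem_specialOrthogonalGroup_mulVec_single_eq i₀ hu
  rw [← hAu, hinv A hA]

theorem IsSOInvariant.eval_eq_mul_sqrt_pow (hinv : P.IsSOInvariant) (hP : P.IsHomogeneous d)
    (i₀ : n) (x : n → ℝ) :
    eval x P = eval (Pi.single i₀ 1) P * √(∑ i, x i ^ 2) ^ d := by
  obtain ⟨u, hu, hxu⟩ := exists_sum_sq_eq_one_and_eq_sqrt_smul x
  conv_lhs => rw [hxu, hP.eval_smul_s9, hinv.eval_eq_of_sum_sq_eq_one i₀ hu]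
  ring

theorem IsSOInvariant.eval_neg (hinv : P.IsSOInvariant) (hP : P.IsHomogeneous d) (x : n → ℝ) :
    eval (-x) P = eval x P := by
  obtain ⟨i₀⟩ := (inferInstance : Nonempty n)
  rw [hinv.eval_eq_mul_sqrt_pow hP i₀ x, hinv.eval_eq_mul_sqrt_pow hP i₀ (-x)]
  simp only [Pi.neg_apply, neg_sq]

end MvPolynomial

/-- A homogeneous polynomial of degree `d` on `ℝ^{m+1}` invariant under `SO(m+1)` (matrices `A`
with `AᵀA = 1` and `det A = 1`, acting by substitution `x ↦ Ax`) vanishes if `d` is odd, and is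
a scalar multiple of `(x_1² + ⋯ + x_{m+1}²)^k` if `d = 2k` is even. -/
theorem stmt_9 (m d : ℕ) (hm : 1 ≤ m) (P : MvPolynomial (Fin (m + 1)) ℝ)
    (hhom : P.IsHomogeneous d)
    (hinv : ∀ A : Matrix (Fin (m + 1)) (Fin (m + 1)) ℝ, Aᵀ * A = 1 → A.det = 1 →
      MvPolynomial.aeval
        (fun i => ∑ j, A i j • (MvPolynomial.X j : MvPolynomial (Fin (m + 1)) ℝ)) P = P) :
    (Odd d → P = 0) ∧
    (∀ k : ℕ, d = 2 * k →
      ∃ c : ℝ, P = MvPolynomial.C c * (∑ i, MvPolynomial.X i ^ 2) ^ k) := by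
  have : Nontrivial (Fin (m + 1)) := Fin.nontrivial_iff_two_le.mpr (by omega)
  have hSO : P.IsSOInvariant := fun A hA x => by
    rw [← eval_aeval_mulVec, hinv A ((mem_orthogonalGroup_iff' _ _).mp hA.1) hA.2]
  refine ⟨fun hodd => funext fun x => ?_, fun k hk => ⟨eval (Pi.single 0 1) P, funext fun x => ?_⟩⟩
  · have hneg : eval (-x) P = -eval x P := by
      rw [← neg_one_smul ℝ x, hhom.eval_smul_s9, hodd.neg_one_pow, neg_one_mul]
    rw [hSO.eval_neg hhom] at hneg
    simp only [map_zero]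
    linarith
  · rw [hSO.eval_eq_mul_sqrt_pow hhom 0, hk, pow_mul,
      Real.sq_sqrt (Finset.sum_nonneg fun i _ => sq_nonneg _)]
    simp
end

section
/- Let m ≥ 1 and k ∈ ℕ, and let T be a symmetric tensor of order k on ℝ^{m+1}, i.e. a function T : (Fin k → Fin (m+1)) → ℝ with T(ι∘τ) = T(ι) for every permutation τ of Fin k. Then δ⌟(δ⊙T) = (m+2k+1)·T + δ⊙(δ⌟T), where δ is the Kronecker delta tensor of order 2, ⊙ is the unnormalized symmetric (shuffle) product, and ⌟ is contraction with δ. -/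
/-! A symmetric tensor only sees the multiset of its indices, so `(δ ⊙ T)(j)` is the sum, over
2-element sets `S` of positions, of `δ(j|S) ⋅ T(j|Sᶜ)`. For `j = (i, p, p)` split `S` by how it
meets the last two positions: `S` equal to them gives `T(i)` for each of the `m + 1` values of
`p`; `S` made of one of them and an old position `a` forces `p = i a` and gives `T(i)` again,
`2k` times in all; `S` inside the old positions gives `(δ ⊙ (δ ⌟ T))(i)`. -/

/-- The unnormalized symmetric (shuffle) product of tensors on `Fin n`:
`(T₁ ⊙ T₂)(i) = Σ_S T₁(i∘enum S) ⋅ T₂(i∘enum Sᶜ)`, summing over `k`-element subsets `S` of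
`Fin (k+l)`, with indices enumerated in increasing order. -/
noncomputable def symProd {n k l : ℕ} (T₁ : (Fin k → Fin n) → ℝ) (T₂ : (Fin l → Fin n) → ℝ) :
    (Fin (k + l) → Fin n) → ℝ :=
  fun i => ∑ S : {S : Finset (Fin (k + l)) // S.card = k},
    T₁ (fun a => i ((S.1.orderIsoOfFin S.2 a : Fin (k + l)))) *
      T₂ (fun b => i ((S.1ᶜ.orderIsoOfFin
        (by rw [Finset.card_compl, S.2, Fintype.card_fin]; omega) b : Fin (k + l))))

/-- The Kronecker delta, as a symmetric tensor of order 2 on `Fin n`. -/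
def kdelta (n : ℕ) : (Fin 2 → Fin n) → ℝ := fun i => if i 0 = i 1 then 1 else 0

/-- Contraction of a tensor of order `k` with the Kronecker delta in its last two indices,
`(δ⌟T)(i_1,…,i_{k−2}) = Σ_p T(i_1,…,i_{k−2},p,p)`; by convention `δ⌟T = 0` when `k < 2`. -/
noncomputable def contract {n k : ℕ} (T : (Fin k → Fin n) → ℝ) : (Fin (k - 2) → Fin n) → ℝ :=
  if 2 ≤ k then
    fun i => ∑ p : Fin n, T (fun j => if hj : (j : ℕ) < k - 2 then i ⟨j, hj⟩ else p)
  else 0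

/-- Reindexing a tensor along an equality of orders. -/
def castTensor {n a b : ℕ} (h : a = b) (T : (Fin a → Fin n) → ℝ) : (Fin b → Fin n) → ℝ :=
  fun i => T (fun j => i (Fin.cast h j))

open Finset

theorem exists_perm_comp_eq_of_map_univ_eq {ι α : Type*} [Fintype ι] {f g : ι → α}
    (h : univ.val.map f = univ.val.map g) : ∃ σ : Equiv.Perm ι, g ∘ σ = f := by
  classical
  have hfiber (c : α) : Fintype.card {a // f a = c} = Fintype.card {b // g b = c} := by
    have := congrArg (Multiset.count c) h
    simp only [Multiset.count_map] at this
    simpa [Fintype.card_subtype, Finset.card, eq_comm] using this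
  exact ⟨Equiv.ofFiberEquiv fun c => Fintype.equivOfCardEq (hfiber c),
    funext (Equiv.ofFiberEquiv_map _)⟩

theorem Multiset.map_univ_get_toList {α : Type*} {k : ℕ} (s : Multiset α)
    (h : k = s.toList.length) : univ.val.map (fun j : Fin k => s.toList.get (j.cast h)) = s := by
  subst h
  rw [Fin.univ_val_map]
  exact (congrArg _ (List.ofFn_get _)).trans (Multiset.coe_toList s)

theorem Multiset.cons_cons_sub_pair {α : Type*} [DecidableEq α] (a : α) (s : Multiset α) :
    a ::ₘ a ::ₘ s - {a, a} = s := by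
  simp [Multiset.sub_cons]

namespace Finset

theorem map_val_pair {ι α : Type*} [DecidableEq ι] {x y : ι} (h : x ≠ y) (f : ι → α) :
    ({x, y} : Finset ι).val.map f = {f x, f y} := by
  rw [insert_val_of_notMem (by simpa using h)]
  rfl

theorem map_val_compl {ι α : Type*} [Fintype ι] [DecidableEq ι] [DecidableEq α] (s : Finset ι)
    (f : ι → α) : sᶜ.val.map f = univ.val.map f - s.val.map f := by
  rw [← disjUnion_eq_union s sᶜ disjoint_compl_right |>.trans (union_compl s), disjUnion_val,
    Multiset.map_add, add_tsub_cancel_left]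

theorem map_val_orderIsoOfFin {N c : ℕ} {α : Type*} (s : Finset (Fin N)) (h : s.card = c)
    (f : Fin N → α) : univ.val.map (fun a => f (s.orderIsoOfFin h a)) = s.val.map f := by
  conv_rhs => rw [← map_orderEmbOfFin_univ s h, map_val, Multiset.map_map]
  rfl

theorem sum_powersetCard_succ_insert {ι M : Type*} [DecidableEq ι] [AddCommMonoid M] {x : ι}
    {s : Finset ι} (hx : x ∉ s) (n : ℕ) (F : Finset ι → M) :
    ∑ t ∈ powersetCard (n + 1) (insert x s), F t =
      ∑ t ∈ powersetCard (n + 1) s, F t + ∑ t ∈ powersetCard n s, F (insert x t) := by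
  have hxt {t : Finset ι} (ht : t ∈ powersetCard n s) : x ∉ t :=
    fun h => hx ((mem_powersetCard.1 ht).1 h)
  rw [powersetCard_succ_insert hx, sum_union, sum_image]
  · intro t ht t' ht' h
    rw [← erase_insert (hxt ht), h, erase_insert (hxt ht')]
  · refine disjoint_left.2 fun t ht ht' => ?_
    obtain ⟨t', -, rfl⟩ := mem_image.1 ht'
    exact hx ((mem_powersetCard.1 ht).1 (mem_insert_self x t'))

theorem sum_powersetCard_two_insert_insert {ι M : Type*} [DecidableEq ι] [AddCommMonoid M]
    {x y : ι} {s : Finset ι} (hxy : x ≠ y) (hx : x ∉ s) (hy : y ∉ s) (F : Finset ι → M) :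
    ∑ t ∈ powersetCard 2 (insert x (insert y s)), F t =
      F {x, y} + ∑ z ∈ s, F {x, z} + ∑ z ∈ s, F {y, z} +
        ∑ t ∈ powersetCard 2 s, F t := by
  have hx' : x ∉ insert y s := by simp [hxy, hx]
  rw [sum_powersetCard_succ_insert hx', sum_powersetCard_succ_insert hy, powersetCard_one,
    powersetCard_one, sum_map, sum_map, sum_insert hy]
  simp only [Function.Embedding.coeFn_mk]
  abel

end Finset

namespace Fin

theorem univ_eq_insert_insert_map_castAddEmb (k : ℕ) :
    (univ : Finset (Fin (k + 2))) =
      insert (last (k + 1)) (insert (last k).castSucc (univ.map (castAddEmb 2))) := by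
  ext x
  simp only [mem_univ, mem_insert, mem_map, true_and, true_iff, Fin.ext_iff, val_last,
    val_castSucc, castAddEmb_apply, val_castAdd]
  by_cases hx : (x : ℕ) < k
  · exact Or.inr (Or.inr ⟨⟨x, hx⟩, rfl⟩)
  · omega

theorem sum_powersetCard_two_univ {M : Type*} [AddCommMonoid M] (k : ℕ)
    (F : Finset (Fin (k + 2)) → M) :
    ∑ S ∈ powersetCard 2 univ, F S =
      F {last (k + 1), (last k).castSucc} + ∑ a : Fin k, F {last (k + 1), a.castAdd 2}
        + ∑ a : Fin k, F {(last k).castSucc, a.castAdd 2}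
        + ∑ S ∈ powersetCard 2 univ, F (S.map (castAddEmb 2)) := by
  rw [univ_eq_insert_insert_map_castAddEmb, sum_powersetCard_two_insert_insert, sum_map,
    sum_map, powersetCard_map, sum_map]
  · rfl
  all_goals simp [Fin.ext_iff]
  all_goals intro x; omega

end Fin

theorem sum_powersetCard_comp_cast {α M : Type*} [AddCommMonoid M] {a b c : ℕ} (h : a = b)
    (f : Fin b → α) (F : Multiset α → Multiset α → M) :
    ∑ S ∈ powersetCard c (univ : Finset (Fin a)),
        F (S.val.map fun j => f (j.cast h)) (Sᶜ.val.map fun j => f (j.cast h)) =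
      ∑ S ∈ powersetCard c univ, F (S.val.map f) (Sᶜ.val.map f) := by
  subst h
  rfl

def IsSymmTensor {α β : Type*} {k : ℕ} (T : (Fin k → α) → β) : Prop :=
  ∀ (τ : Equiv.Perm (Fin k)) (ι : Fin k → α), T (ι ∘ τ) = T ι

/-- The value of a tensor at a multiset of indices, read off one enumeration of it
(junk value `0` unless the multiset has exactly `k` elements). -/
noncomputable def evalMultiset {α β : Type*} [Zero β] {k : ℕ} (T : (Fin k → α) → β)
    (s : Multiset α) : β :=
  if h : Multiset.card s = k then T fun j => s.toList.get (j.cast (by simp [h])) else 0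

section IsSymmTensor

variable {α β : Type*} {k : ℕ} {T : (Fin k → α) → β}

theorem IsSymmTensor.apply_eq_of_map_univ_eq (hT : IsSymmTensor T) {f g : Fin k → α}
    (h : univ.val.map f = univ.val.map g) : T f = T g := by
  obtain ⟨σ, rfl⟩ := exists_perm_comp_eq_of_map_univ_eq h
  exact hT σ g

theorem IsSymmTensor.evalMultiset_map_univ [Zero β] (hT : IsSymmTensor T) (f : Fin k → α) :
    evalMultiset T (univ.val.map f) = T f := by
  rw [evalMultiset, dif_pos (by simp)]
  exact hT.apply_eq_of_map_univ_eq (Multiset.map_univ_get_toList _ _)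

end IsSymmTensor

def extendConst {α : Type*} {n N : ℕ} (f : Fin n → α) (p : α) : Fin N → α :=
  fun j => if h : (j : ℕ) < n then f ⟨j, h⟩ else p

theorem extendConst_castAdd {α : Type*} {n m : ℕ} (f : Fin n → α) (p : α) (a : Fin n) :
    extendConst f p (a.castAdd m) = f a := by
  simp [extendConst]

theorem extendConst_of_le {α : Type*} {n N : ℕ} (f : Fin n → α) (p : α) {j : Fin N}
    (hj : n ≤ j) : extendConst f p j = p := by
  simp [extendConst, hj]

theorem map_univ_extendConst {α : Type*} {n N : ℕ} (hnN : n ≤ N) (f : Fin n → α) (p : α) :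
    univ.val.map (extendConst f p : Fin N → α) =
      univ.val.map f + Multiset.replicate (N - n) p := by
  simp only [Fin.univ_val_map, ← Multiset.coe_replicate, Multiset.coe_add]
  congr 1
  refine List.ext_getElem (by simp; omega) fun j _ _ => ?_
  simp only [List.getElem_ofFn, List.getElem_append, List.length_ofFn, extendConst]
  split_ifs <;> simp

theorem isSymmTensor_kdelta (n : ℕ) : IsSymmTensor (kdelta n) := by
  intro τ ι
  have hpair : ∀ a b : Fin 2, a ≠ b → (ι a = ι b ↔ ι 0 = ι 1) := by
    intro a b
    fin_cases a <;> fin_cases b <;> simp [eq_comm]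
  simp only [kdelta, Function.comp_apply, hpair _ _ (τ.injective.ne zero_ne_one)]

theorem evalMultiset_kdelta_pair {n : ℕ} (a b : Fin n) :
    evalMultiset (kdelta n) {a, b} = if a = b then 1 else 0 := by
  have hab : ({a, b} : Multiset (Fin n)) = univ.val.map ![a, b] := by simp; rfl
  rw [hab, (isSymmTensor_kdelta n).evalMultiset_map_univ]
  rfl

theorem symProd_eq_sum_powersetCard {n k l : ℕ} {T₁ : (Fin k → Fin n) → ℝ}
    {T₂ : (Fin l → Fin n) → ℝ} (h₁ : IsSymmTensor T₁) (h₂ : IsSymmTensor T₂)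
    (f : Fin (k + l) → Fin n) :
    symProd T₁ T₂ f = ∑ S ∈ powersetCard k univ,
      evalMultiset T₁ (S.val.map f) * evalMultiset T₂ (Sᶜ.val.map f) := by
  rw [symProd, sum_subtype (powersetCard k univ) (p := fun S => S.card = k) (by simp)]
  refine Fintype.sum_congr _ _ fun S => ?_
  rw [← h₁.evalMultiset_map_univ, ← h₂.evalMultiset_map_univ, map_val_orderIsoOfFin,
    map_val_orderIsoOfFin]

section contract

variable {n k : ℕ} {T : (Fin k → Fin n) → ℝ}

theorem contract_apply_of_two_le (hk : 2 ≤ k) (T : (Fin k → Fin n) → ℝ)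
    (f : Fin (k - 2) → Fin n) : contract T f = ∑ p, T (extendConst f p) := by
  rw [contract, if_pos hk]
  rfl

theorem IsSymmTensor.contract_eq_sum_evalMultiset (hT : IsSymmTensor T) (hk : 2 ≤ k)
    (f : Fin (k - 2) → Fin n) :
    contract T f = ∑ p, evalMultiset T (p ::ₘ p ::ₘ univ.val.map f) := by
  rw [contract_apply_of_two_le hk]
  refine sum_congr rfl fun p _ => ?_
  rw [← hT.evalMultiset_map_univ, map_univ_extendConst (by omega), show k - (k - 2) = 2 by omega]
  simp only [Multiset.replicate_succ, Multiset.replicate_zero, Multiset.add_cons, add_zero]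

theorem isSymmTensor_contract (hT : IsSymmTensor T) : IsSymmTensor (contract T) := by
  intro τ f
  by_cases hk : 2 ≤ k
  · rw [hT.contract_eq_sum_evalMultiset hk, hT.contract_eq_sum_evalMultiset hk,
      ← Multiset.map_map, Multiset.map_univ_val_equiv]
  · simp [contract, hk]

theorem IsSymmTensor.evalMultiset_contract (hT : IsSymmTensor T) (hk : 2 ≤ k)
    {s : Multiset (Fin n)} (hs : Multiset.card s = k - 2) :
    evalMultiset (contract T) s = ∑ p, evalMultiset T (p ::ₘ p ::ₘ s) := by
  obtain ⟨f, rfl⟩ : ∃ f : Fin (k - 2) → Fin n, univ.val.map f = s :=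
    ⟨_, Multiset.map_univ_get_toList s (by simp [hs])⟩
  rw [(isSymmTensor_contract hT).evalMultiset_map_univ, hT.contract_eq_sum_evalMultiset hk]

theorem contract_castTensor_symProd_kdelta_apply (hT : IsSymmTensor T) (i : Fin k → Fin n) :
    contract (castTensor (Nat.add_comm 2 k) (symProd (kdelta n) T)) i =
      ∑ p, ∑ S ∈ powersetCard 2 (univ : Finset (Fin (k + 2))),
        evalMultiset (kdelta n) (S.val.map (extendConst i p)) *
          evalMultiset T (p ::ₘ p ::ₘ univ.val.map i - S.val.map (extendConst i p)) := by
  rw [contract_apply_of_two_le (by omega)]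
  refine sum_congr rfl fun p _ => ?_
  rw [castTensor, symProd_eq_sum_powersetCard (isSymmTensor_kdelta n) hT,
    sum_powersetCard_comp_cast _ _ fun s t => evalMultiset (kdelta n) s * evalMultiset T t]
  refine sum_congr rfl fun S _ => ?_
  rw [map_val_compl, map_univ_extendConst (by omega), show k + 2 - (k + 2 - 2) = 2 by omega]
  simp only [Multiset.replicate_succ, Multiset.replicate_zero, Multiset.add_cons, add_zero]

theorem sum_evalMultiset_kdelta_pair_mul (s : Multiset (Fin n)) (q : Fin n) :
    ∑ p, evalMultiset (kdelta n) {p, q} * evalMultiset T (p ::ₘ p ::ₘ s - {p, q}) =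
      evalMultiset T s := by
  simp only [evalMultiset_kdelta_pair, ite_mul, one_mul, zero_mul, sum_ite_eq', mem_univ,
    if_true, Multiset.cons_cons_sub_pair]

theorem contract_castTensor_symProd_kdelta (hT : IsSymmTensor T) (i : Fin k → Fin n) :
    contract (castTensor (Nat.add_comm 2 k) (symProd (kdelta n) T)) i =
      (n + 2 * k) * T i + ∑ S ∈ powersetCard 2 univ, evalMultiset (kdelta n) (S.val.map i) *
        ∑ p, evalMultiset T (p ::ₘ p ::ₘ Sᶜ.val.map i) := by
  set Φ : Fin n → Multiset (Fin n) → ℝ :=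
    fun p s => evalMultiset (kdelta n) s * evalMultiset T (p ::ₘ p ::ₘ univ.val.map i - s)
  have hlast (p) : extendConst i p (Fin.last (k + 1)) = p := extendConst_of_le _ _ (by simp)
  have hlast' (p) : extendConst i p (Fin.last k).castSucc = p := extendConst_of_le _ _ (by simp)
  have hcomp (p) : extendConst i p ∘ Fin.castAddEmb 2 = i := funext (extendConst_castAdd i p)
  have hA : ∑ p, Φ p (({Fin.last (k + 1), (Fin.last k).castSucc} : Finset _).val.map
      (extendConst i p)) = n * T i := by
    have huv : Fin.last (k + 1) ≠ (Fin.last k).castSucc := Fin.ne_of_val_ne (by simp)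
    simp only [Φ, Finset.map_val_pair huv, hlast, hlast', evalMultiset_kdelta_pair, if_true,
      one_mul, Multiset.cons_cons_sub_pair, hT.evalMultiset_map_univ, sum_const, card_univ,
      Fintype.card_fin, nsmul_eq_mul]
  have hB (x : Fin (k + 2)) (hx : ∀ p, extendConst i p x = p) (hxk : k ≤ x) (a : Fin k) :
      ∑ p, Φ p (({x, a.castAdd 2} : Finset _).val.map (extendConst i p)) = T i := by
    have hxa : x ≠ a.castAdd 2 := Fin.ne_of_val_ne (by simp; omega)
    simp only [Φ, Finset.map_val_pair hxa, hx, extendConst_castAdd,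
      sum_evalMultiset_kdelta_pair_mul, hT.evalMultiset_map_univ]
  have hC (S : Finset (Fin k)) :
      ∑ p, Φ p ((S.map (Fin.castAddEmb 2)).val.map (extendConst i p)) =
        evalMultiset (kdelta n) (S.val.map i) *
          ∑ p, evalMultiset T (p ::ₘ p ::ₘ Sᶜ.val.map i) := by
    have hle : S.val.map i ≤ univ.val.map i := Multiset.map_le_map (val_le_iff.2 (subset_univ S))
    simp only [Φ, map_val, Multiset.map_map, hcomp, mul_sum, map_val_compl,
      Multiset.cons_sub_of_le _ hle,
      Multiset.cons_sub_of_le _ (hle.trans (Multiset.le_cons_self _ _))]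
  rw [contract_castTensor_symProd_kdelta_apply hT]
  change ∑ p, ∑ S ∈ powersetCard 2 univ, Φ p (S.val.map (extendConst i p)) = _
  simp only [Fin.sum_powersetCard_two_univ, sum_add_distrib]
  rw [hA, sum_comm, sum_congr rfl fun a _ => hB _ hlast (by simp) a, sum_comm (s := univ),
    sum_congr rfl fun a _ => hB _ hlast' (by simp) a, sum_comm, sum_congr rfl fun S _ => hC S]
  simp only [sum_const, card_univ, Fintype.card_fin, nsmul_eq_mul]
  ring

end contract

theorem castTensor_symProd_kdelta_contract {n k : ℕ} {T : (Fin k → Fin n) → ℝ}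
    (hT : IsSymmTensor T) (hk : 2 ≤ k) (i : Fin k → Fin n) :
    castTensor (Nat.add_sub_of_le hk) (symProd (kdelta n) (contract T)) i =
      ∑ S ∈ powersetCard 2 univ, evalMultiset (kdelta n) (S.val.map i) *
        ∑ p, evalMultiset T (p ::ₘ p ::ₘ Sᶜ.val.map i) := by
  rw [castTensor, symProd_eq_sum_powersetCard (isSymmTensor_kdelta n) (isSymmTensor_contract hT),
    sum_powersetCard_comp_cast _ _ fun s t =>
      evalMultiset (kdelta n) s * evalMultiset (contract T) t]
  refine sum_congr rfl fun S hS => ?_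
  rw [hT.evalMultiset_contract hk (by simp [card_compl, (mem_powersetCard.1 hS).2])]

/-- For a symmetric tensor `T` of order `k` on `ℝ^{m+1}`:
`δ⌟(δ⊙T) = (m+2k+1)·T + δ⊙(δ⌟T)` (where `δ⌟T := 0` if `k < 2`). -/
theorem stmt_10 (m k : ℕ) (T : (Fin k → Fin (m + 1)) → ℝ)
    (hsym : ∀ (τ : Equiv.Perm (Fin k)) (ι : Fin k → Fin (m + 1)), T (ι ∘ τ) = T ι) :
    contract (castTensor (by omega : 2 + k = k + 2) (symProd (kdelta (m + 1)) T)) =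
      fun i => ((m : ℝ) + 2 * k + 1) * T i +
        (if h : 2 ≤ k then
          castTensor (by omega : 2 + (k - 2) = k)
            (symProd (kdelta (m + 1)) (contract T)) i
        else 0) := by
  funext i
  rw [contract_castTensor_symProd_kdelta hsym]
  split_ifs with hk
  · rw [castTensor_symProd_kdelta_contract hsym hk]
    push_cast
    ring
  · rw [powersetCard_eq_empty.2 (by simpa using hk), sum_empty]
    push_cast
    ring
end

section
/- Let σ be a type of variables, and let A be a subalgebra of the multivariate polynomial ring ℝ[X_s : s ∈ σ] that is closed under taking homogeneous components (i.e. if P ∈ A then every total-degree homogeneous component of P lies in A). Let F be a formal multivariate power series in the variables X_s with real coefficients such that F has constant coefficient 1 and, for every n ∈ ℕ, the truncation of F to total degree < n lies in A. Then for every real number α and every l ∈ ℕ, the truncation to total degree ≤ l of the polynomial-valued partial sum Σ_{k=0}^{l} binom(α,k)·(F − 1)^k lies in A, where binom(α,k) := α(α−1)⋯(α−k+1)/k! is the generalized binomial coefficient. (Since (F−1) has zero constant coefficient, the truncation to degree ≤ l of (F−1)^k vanishes for k > l, so this partial sum computes the degree-≤ l truncation of the binomial power F^α := Σ_{k=0}^{∞}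 binom(α,k)(F−1)^k; hence all truncations of F^α lie in A.) -/
/-- The generalized binomial coefficient `binom(α,k) = α(α−1)⋯(α−k+1)/k!`. -/
noncomputable def genBinom (α : ℝ) (k : ℕ) : ℝ :=
  (∏ i ∈ Finset.range k, (α - i)) / (Nat.factorial k : ℝ)

/-- `truncDegreeLTMem A n F` says that the truncation of the formal power series `F` to total
degree `< n` is a polynomial lying in the subalgebra `A`: there is a polynomial `P ∈ A` whose
coefficients agree with those of `F` in total degree `< n` and vanish in total degree `≥ n`. -/
def truncDegreeLTMem {σ : Type*} (A : Subalgebra ℝ (MvPolynomial σ ℝ)) (n : ℕ)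
    (F : MvPowerSeries σ ℝ) : Prop :=
  ∃ P : MvPolynomial σ ℝ, P ∈ A ∧
    (∀ d : σ →₀ ℕ, (d.sum fun _ e => e) < n →
        MvPolynomial.coeff d P = MvPowerSeries.coeff d F) ∧
    (∀ d : σ →₀ ℕ, n ≤ (d.sum fun _ e => e) → MvPolynomial.coeff d P = 0)

/-- `truncDegreeLEMem A l F` says that the truncation of the formal power series `F` to total
degree `≤ l` is a polynomial lying in the subalgebra `A`. -/
def truncDegreeLEMem {σ : Type*} (A : Subalgebra ℝ (MvPolynomial σ ℝ)) (l : ℕ)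
    (F : MvPowerSeries σ ℝ) : Prop :=
  ∃ P : MvPolynomial σ ℝ, P ∈ A ∧
    (∀ d : σ →₀ ℕ, (d.sum fun _ e => e) ≤ l →
        MvPolynomial.coeff d P = MvPowerSeries.coeff d F) ∧
    (∀ d : σ →₀ ℕ, l < (d.sum fun _ e => e) → MvPolynomial.coeff d P = 0)

/-! The partial sum is `p(F)` for the real polynomial `p = Σ_{k ≤ l} binom(α,k) (X - 1)^k`.
If `P ∈ A` is the truncation of `F` below degree `l + 1`, then `F - P` has order `> l`, and so
has `p(F) - p(P)`, being a multiple of `F - P`. Hence `p(F)` and `p(P) ∈ A` agree up to degree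
`l`, and the truncation of `p(P)` is a sum of its homogeneous components, which lie in `A`. -/

open Polynomial

theorem MvPowerSeries.order_sub_le_order_aeval_sub {σ R : Type*} [CommRing R]
    (f g : MvPowerSeries σ R) (p : R[X]) :
    (f - g).order ≤ (Polynomial.aeval f p - Polynomial.aeval g p).order := by
  obtain ⟨c, hc⟩ := sub_dvd_eval_sub f g (p.map (algebraMap R _))
  rw [aeval_def, aeval_def, ← eval_map, ← eval_map, hc]
  exact le_self_add.trans le_order_mul

theorem MvPowerSeries.coeff_aeval_eq_of_coeff_eq {σ R : Type*} [CommRing R]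
    {f g : MvPowerSeries σ R} {n : ℕ} (h : ∀ d : σ →₀ ℕ, d.degree < n → coeff d f = coeff d g)
    (p : R[X]) {d : σ →₀ ℕ} (hd : d.degree < n) :
    coeff d (Polynomial.aeval f p) = coeff d (Polynomial.aeval g p) := by
  have hfg : (n : ℕ∞) ≤ (f - g).order :=
    nat_le_order fun e he => by rw [map_sub, h e he, sub_self]
  rw [← sub_eq_zero, ← map_sub]
  exact coeff_of_lt_order <| (Nat.cast_lt.mpr hd).trans_le <|
    hfg.trans (order_sub_le_order_aeval_sub f g p)

theorem MvPolynomial.coe_aeval {σ R : Type*} [CommSemiring R] (P : MvPolynomial σ R) (p : R[X]) :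
    ((Polynomial.aeval P p : MvPolynomial σ R) : MvPowerSeries σ R) =
      Polynomial.aeval (P : MvPowerSeries σ R) p := by
  simpa only [coeToMvPowerSeries.algHom_apply, Algebra.algebraMap_self, MvPowerSeries.map_id,
    RingHom.id_apply]
    using (aeval_algHom_apply (coeToMvPowerSeries.algHom R) P p).symm

section Truncation

variable {σ : Type*} {A : Subalgebra ℝ (MvPolynomial σ ℝ)} {F : MvPowerSeries σ ℝ}

theorem truncDegreeLTMem_of_coeff_eq
    (hA : ∀ P ∈ A, ∀ d : ℕ, MvPolynomial.homogeneousComponent d P ∈ A) {n : ℕ}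
    {Q : MvPolynomial σ ℝ} (hQ : Q ∈ A)
    (hQF : ∀ d : σ →₀ ℕ, d.degree < n → MvPolynomial.coeff d Q = MvPowerSeries.coeff d F) :
    truncDegreeLTMem A n F := by
  refine ⟨∑ i ∈ Finset.range n, MvPolynomial.homogeneousComponent i Q,
    A.sum_mem fun i _ => hA Q hQ i, fun d hd => ?_, fun d hd => ?_⟩ <;>
  simp only [MvPolynomial.coeff_sum, MvPolynomial.coeff_homogeneousComponent,
    Finset.sum_ite_eq, Finset.mem_range]
  · exact (if_pos hd).trans (hQF d hd)
  · exact if_neg hd.not_gt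

theorem truncDegreeLTMem.aeval
    (hA : ∀ P ∈ A, ∀ d : ℕ, MvPolynomial.homogeneousComponent d P ∈ A) {n : ℕ}
    (hF : truncDegreeLTMem A n F) (p : ℝ[X]) : truncDegreeLTMem A n (Polynomial.aeval F p) := by
  obtain ⟨P, hPA, hPF, -⟩ := hF
  refine truncDegreeLTMem_of_coeff_eq hA
    (Algebra.adjoin_singleton_le hPA (aeval_mem_adjoin_singleton ℝ P (p := p))) fun d hd => ?_
  rw [← MvPolynomial.coeff_coe, MvPolynomial.coe_aeval]
  exact MvPowerSeries.coeff_aeval_eq_of_coeff_eq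
    (fun e he => (MvPolynomial.coeff_coe P e).trans (hPF e he)) p hd

theorem truncDegreeLEMem_iff_truncDegreeLTMem_succ {l : ℕ} :
    truncDegreeLEMem A l F ↔ truncDegreeLTMem A (l + 1) F := by
  simp only [truncDegreeLEMem, truncDegreeLTMem, Nat.lt_succ_iff, Nat.succ_le_iff]

end Truncation

theorem stmt_15_general {σ : Type*} (A : Subalgebra ℝ (MvPolynomial σ ℝ))
    (hA : ∀ P ∈ A, ∀ d : ℕ, MvPolynomial.homogeneousComponent d P ∈ A)
    (F : MvPowerSeries σ ℝ)
    (hFtrunc : ∀ n : ℕ, truncDegreeLTMem A n F) :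
    ∀ (α : ℝ) (l : ℕ),
      truncDegreeLEMem A l (∑ k ∈ Finset.range (l + 1), genBinom α k • (F - 1) ^ k) := by
  intro α l
  have hsum : ∑ k ∈ Finset.range (l + 1), genBinom α k • (F - 1) ^ k =
      Polynomial.aeval F (∑ k ∈ Finset.range (l + 1), C (genBinom α k) * (X - 1) ^ k) := by
    simp [Algebra.smul_def]
  rw [hsum, truncDegreeLEMem_iff_truncDegreeLTMem_succ]
  exact (hFtrunc (l + 1)).aeval hA _

/-- Let `A` be a subalgebra of `ℝ[X_s : s ∈ σ]` closed under taking total-degree homogeneous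
components, and let `F` be a formal power series with constant coefficient `1` all of whose
total-degree truncations lie in `A`.  Then for every `α : ℝ` and `l : ℕ`, the truncation to
total degree `≤ l` of the partial sum `Σ_{k=0}^{l} binom(α,k)(F−1)^k` (which computes the
degree-`≤ l` truncation of the binomial power `F^α`) lies in `A`. -/
theorem stmt_15 {σ : Type*} (A : Subalgebra ℝ (MvPolynomial σ ℝ))
    (hA : ∀ P ∈ A, ∀ d : ℕ, MvPolynomial.homogeneousComponent d P ∈ A)
    (F : MvPowerSeries σ ℝ)
    (hF1 : MvPowerSeries.constantCoeff F = 1)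
    (hFtrunc : ∀ n : ℕ, truncDegreeLTMem A n F) :
    ∀ (α : ℝ) (l : ℕ),
      truncDegreeLEMem A l (∑ k ∈ Finset.range (l + 1), genBinom α k • (F - 1) ^ k) :=
  stmt_15_general A hA F hFtrunc
end
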